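/- For α ∈ ℕ, β > −1, and n ≥ 1, the classical Jacobi operator L₂^{α,β} y = (x²−1)y'' + [α−β+(α+β+2)x]y' satisfies {L₂^{α,β} − n(n+α+β+1)} R_n^{α,β}(x) = (2(α+1)/(x−1))·R_n^{α,β}(x) = ((α+1)_n (α+β+2)_n / (n! (β+1)_{n−1}))·P_{n−1}^{α+2,β}(x) for x ≠ 1. -/

import Mathlib

/-- Pochhammer symbol (rising factorial) for a real argument. -/
noncomputable def poch (a : ℝ) (k : ℕ) : ℝ := ∏ i ∈ Finset.range k, (a + i)

/-- Jacobi polynomial of degree `n` with real parameters `γ, δ`, via its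
terminating hypergeometric series. -/
noncomputable def jacobiP (n : ℕ) (γ δ : ℝ) (x : ℝ) : ℝ :=
  (poch (γ + 1) n / Nat.factorial n) *
    ∑ k ∈ Finset.range (n + 1),
      (poch (-(n : ℝ)) k * poch ((n : ℝ) + γ + δ + 1) k /
        (poch (γ + 1) k * Nat.factorial k)) * ((1 - x) / 2) ^ k

/-!
Writing `R = A (x - 1) P` with `P = P_{n-1}^{α+2,β}`, the product rule gives
`L^{α,β}[(x - 1) P] = (x - 1) (L^{α+2,β} P + (α + β + 2) P) + 2 (α + 1) P`,
and `P` is an eigenfunction of `L^{α+2,β}` with eigenvalue `(n - 1)(n + α + β + 2)`.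
The eigenvalue equation of the Jacobi polynomials is obtained from Gauss's hypergeometric
equation by the substitution `t = (1 - x) / 2`.
-/

open Polynomial Finset

lemma poch_succ (a : ℝ) (k : ℕ) : poch a (k + 1) = poch a k * (a + k) :=
  prod_range_succ _ _

lemma poch_succ' (a : ℝ) (k : ℕ) : poch a (k + 1) = a * poch (a + 1) k := by
  rw [poch, prod_range_succ', mul_comm, Nat.cast_zero, add_zero, poch]
  congr 1
  refine prod_congr rfl fun i _ => ?_
  push_cast
  ring

lemma poch_ne_zero_of_le {a : ℝ} {k m : ℕ} (h : poch a m ≠ 0) (hkm : k ≤ m) : poch a k ≠ 0 := by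
  rw [poch, ← prod_range_mul_prod_Ico _ hkm] at h
  exact left_ne_zero_of_mul h

noncomputable section

def hypergeometricOperator (a b c : ℝ) : ℝ[X] →ₗ[ℝ] ℝ[X] :=
  LinearMap.mulLeft ℝ (X * (1 - X)) ∘ₗ derivative ∘ₗ derivative
    + LinearMap.mulLeft ℝ (C c - C (a + b + 1) * X) ∘ₗ derivative - (a * b) • LinearMap.id

lemma hypergeometricOperator_apply (a b c : ℝ) (F : ℝ[X]) :
    hypergeometricOperator a b c F = X * (1 - X) * derivative (derivative F)
      + (C c - C (a + b + 1) * X) * derivative F - (a * b) • F :=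
  rfl

lemma hypergeometricOperator_X_pow (a b c : ℝ) (k : ℕ) :
    hypergeometricOperator a b c (X ^ k)
      = ((k : ℝ) * (k - 1 + c)) • X ^ (k - 1) - ((k + a) * (k + b)) • X ^ k := by
  rw [hypergeometricOperator_apply]
  simp only [smul_eq_C_mul]
  match k with
  | 0 => simp
  | 1 => simp; ring
  | k + 2 =>
    simp only [derivative_X_pow, derivative_C_mul]
    rw [show k + 2 - 1 = k + 1 from rfl, show k + 1 - 1 = k from rfl]
    simp only [map_mul, map_add, map_sub, map_natCast, map_one]
    push_cast
    ring

def hypergeometricCoeff (a b c : ℝ) (k : ℕ) : ℝ :=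
  poch a k * poch b k / (poch c k * Nat.factorial k)

lemma hypergeometricCoeff_succ {a b c : ℝ} {k : ℕ} (hc : poch c (k + 1) ≠ 0) :
    ((k : ℝ) + 1) * (k + c) * hypergeometricCoeff a b c (k + 1)
      = (k + a) * (k + b) * hypergeometricCoeff a b c k := by
  obtain ⟨hck, hck'⟩ := mul_ne_zero_iff.mp (poch_succ c k ▸ hc)
  simp only [hypergeometricCoeff, poch_succ, Nat.factorial_succ]
  push_cast
  field_simp
  ring

/-- `₂F₁(a, b; c; t)` truncated after `t ^ m`: the whole series when `a = -m`. -/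
def hypergeometricPoly (a b c : ℝ) (m : ℕ) : ℝ[X] :=
  ∑ k ∈ range (m + 1), hypergeometricCoeff a b c k • X ^ k

theorem hypergeometricOperator_hypergeometricPoly {a b c : ℝ} {m : ℕ} (ha : (m : ℝ) + a = 0)
    (hc : poch c m ≠ 0) : hypergeometricOperator a b c (hypergeometricPoly a b c m) = 0 := by
  simp only [hypergeometricPoly, map_sum, map_smul, hypergeometricOperator_X_pow, smul_sub,
    smul_smul, sum_sub_distrib]
  -- the two sums telescope: shift the first one down by one
  rw [sum_range_succ'
      (fun k => (hypergeometricCoeff a b c k * ((k : ℝ) * (k - 1 + c))) • X ^ (k - 1)),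
    sum_range_succ, ha]
  simp only [Nat.cast_zero, zero_mul, mul_zero, zero_smul, add_zero, Nat.add_sub_cancel,
    sub_eq_zero]
  refine sum_congr rfl fun j hj => ?_
  have hcj := poch_ne_zero_of_le hc (mem_range.mp hj)
  rw [mul_comm (hypergeometricCoeff a b c j), ← hypergeometricCoeff_succ hcj]
  push_cast
  ring_nf

def jacobiOperator (γ δ : ℝ) : ℝ[X] →ₗ[ℝ] ℝ[X] :=
  LinearMap.mulLeft ℝ (X ^ 2 - 1) ∘ₗ derivative ∘ₗ derivative
    + LinearMap.mulLeft ℝ (C (γ - δ) + C (γ + δ + 2) * X) ∘ₗ derivative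

lemma jacobiOperator_apply (γ δ : ℝ) (P : ℝ[X]) :
    jacobiOperator γ δ P = (X ^ 2 - 1) * derivative (derivative P)
      + (C (γ - δ) + C (γ + δ + 2) * X) * derivative P :=
  rfl

lemma eval_jacobiOperator (γ δ : ℝ) (P : ℝ[X]) (x : ℝ) :
    (jacobiOperator γ δ P).eval x
      = (x ^ 2 - 1) * deriv (deriv fun t => P.eval t) x
        + (γ - δ + (γ + δ + 2) * x) * deriv (fun t => P.eval t) x := by
  have hP : deriv (fun t => P.eval t) = fun t => (derivative P).eval t :=
    funext fun _ => Polynomial.deriv P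
  rw [hP, Polynomial.deriv, jacobiOperator_apply]
  simp

lemma jacobiOperator_comp_half_one_sub_X (a b γ δ : ℝ) (hab : a + b = γ + δ + 1) (F : ℝ[X]) :
    jacobiOperator γ δ (F.comp (C 2⁻¹ * (1 - X)))
      = -(hypergeometricOperator a b (γ + 1) F).comp (C 2⁻¹ * (1 - X))
        - C (a * b) * F.comp (C 2⁻¹ * (1 - X)) := by
  obtain rfl : b = γ + δ + 1 - a := by linarith
  have hT : derivative (C (2⁻¹ : ℝ) * (1 - X)) = -C 2⁻¹ := by simp
  have h2 : (2 : ℝ[X]) * C 2⁻¹ = 1 := by rw [← C_ofNat, ← C_mul]; norm_num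
  rw [jacobiOperator_apply, hypergeometricOperator_apply, derivative_comp, hT,
    derivative_mul, derivative_neg, derivative_C, derivative_comp, hT]
  simp only [smul_eq_C_mul, sub_comp, add_comp, mul_comp, C_comp, X_comp, one_comp]
  simp only [map_sub, map_add, map_mul, map_one, map_ofNat]
  linear_combination (-(C 2⁻¹ * (1 - X) * (derivative (derivative F)).comp (C 2⁻¹ * (1 - X))
    + (C γ + 1) * (derivative F).comp (C 2⁻¹ * (1 - X)))) * h2

def jacobiPoly (m : ℕ) (γ δ : ℝ) : ℝ[X] :=
  (poch (γ + 1) m / Nat.factorial m) •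
    (hypergeometricPoly (-m) (m + γ + δ + 1) (γ + 1) m).comp (C 2⁻¹ * (1 - X))

lemma eval_jacobiPoly (m : ℕ) (γ δ x : ℝ) : (jacobiPoly m γ δ).eval x = jacobiP m γ δ x := by
  simp only [jacobiPoly, jacobiP, hypergeometricPoly, hypergeometricCoeff, eval_smul, eval_comp,
    eval_finsetSum, eval_mul, eval_C, eval_sub, eval_one, eval_X, eval_pow, smul_eq_mul]
  congr 1
  refine sum_congr rfl fun k _ => ?_
  ring

theorem jacobiOperator_jacobiPoly (m : ℕ) (γ δ : ℝ) :
    jacobiOperator γ δ (jacobiPoly m γ δ) = C (m * (m + γ + δ + 1)) * jacobiPoly m γ δ := by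
  by_cases hc : poch (γ + 1) m = 0
  -- then a division by zero makes `jacobiPoly m γ δ = 0`
  · simp [jacobiPoly, hc]
  have hF := hypergeometricOperator_hypergeometricPoly (b := m + γ + δ + 1) (add_neg_cancel _) hc
  rw [jacobiPoly, map_smul,
    jacobiOperator_comp_half_one_sub_X (-m) (m + γ + δ + 1) γ δ (by ring), hF, zero_comp,
    mul_smul_comm]
  congr 1
  simp only [map_mul, map_neg, map_add, map_natCast]
  ring

lemma jacobiOperator_X_sub_one_mul (γ δ : ℝ) (P : ℝ[X]) :
    jacobiOperator γ δ ((X - 1) * P)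
      = (X - 1) * (jacobiOperator (γ + 2) δ P + C (γ + δ + 2) * P) + C (2 * (γ + 1)) * P := by
  simp only [jacobiOperator_apply, derivative_mul, derivative_X, derivative_one, derivative_zero,
    map_add, map_sub, map_mul, map_ofNat, map_one]
  ring

end

theorem stmt10_general (α : ℕ) (β : ℝ) (n : ℕ) (hn : 1 ≤ n)
    (x : ℝ) (hx : x ≠ 1) :
    let A : ℝ := poch ((α : ℝ) + 2) (n - 1) * poch ((α : ℝ) + β + 2) n /
      (2 * Nat.factorial n * poch (β + 1) (n - 1))
    let R : ℝ → ℝ := fun t => A * (t - 1) * jacobiP (n - 1) ((α : ℝ) + 2) β t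
    ((x ^ 2 - 1) * deriv (deriv R) x
        + ((α : ℝ) - β + ((α : ℝ) + β + 2) * x) * deriv R x
        - (n : ℝ) * ((n : ℝ) + α + β + 1) * R x
      = (2 * ((α : ℝ) + 1) / (x - 1)) * R x) ∧
    (2 * ((α : ℝ) + 1) / (x - 1)) * R x
      = (poch ((α : ℝ) + 1) n * poch ((α : ℝ) + β + 2) n /
          (Nat.factorial n * poch (β + 1) (n - 1))) *
          jacobiP (n - 1) ((α : ℝ) + 2) β x := by
  obtain ⟨m, rfl⟩ : ∃ m, n = m + 1 := ⟨n - 1, by omega⟩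
  intro A R
  set P := jacobiPoly m ((α : ℝ) + 2) β
  have hR : R = fun t => (A • ((X - 1) * P)).eval t := by
    funext t
    simp [R, P, eval_jacobiPoly, mul_assoc]
  have hRx : R x = A * (x - 1) * P.eval x := by simp [hR, mul_assoc]
  have hPx : jacobiP (m + 1 - 1) ((α : ℝ) + 2) β x = P.eval x := by simp [P, eval_jacobiPoly]
  have hL := congrArg (eval x) (jacobiOperator_X_sub_one_mul α β P)
  rw [jacobiOperator_jacobiPoly] at hL
  have hx1 : x - 1 ≠ 0 := sub_ne_zero.mpr hx
  have hcancel : 2 * ((α : ℝ) + 1) / (x - 1) * R x = 2 * (α + 1) * A * P.eval x := by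
    rw [hRx]; field_simp
  refine ⟨?_, ?_⟩
  · rw [hcancel, hR, ← eval_jacobiOperator, map_smul, ← hR, hRx]
    simp only [eval_smul, eval_add, eval_mul, eval_sub, eval_X, eval_one, eval_C,
      smul_eq_mul] at hL ⊢
    rw [hL]
    push_cast
    ring
  · rw [hcancel, hPx, poch_succ', show (α : ℝ) + 1 + 1 = α + 2 by ring]
    simp only [A, Nat.add_sub_cancel]
    ring

theorem stmt10 (α : ℕ) (β : ℝ) (hβ : -1 < β) (n : ℕ) (hn : 1 ≤ n)
    (x : ℝ) (hx : x ≠ 1) :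
    let A : ℝ := poch ((α : ℝ) + 2) (n - 1) * poch ((α : ℝ) + β + 2) n /
      (2 * Nat.factorial n * poch (β + 1) (n - 1))
    let R : ℝ → ℝ := fun t => A * (t - 1) * jacobiP (n - 1) ((α : ℝ) + 2) β t
    ((x ^ 2 - 1) * deriv (deriv R) x
        + ((α : ℝ) - β + ((α : ℝ) + β + 2) * x) * deriv R x
        - (n : ℝ) * ((n : ℝ) + α + β + 1) * R x
      = (2 * ((α : ℝ) + 1) / (x - 1)) * R x) ∧
    (2 * ((α : ℝ) + 1) / (x - 1)) * R x
      = (poch ((α : ℝ) + 1) n * poch ((α : ℝ) + β + 2) n /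
          (Nat.factorial n * poch (β + 1) (n - 1))) *
          jacobiP (n - 1) ((α : ℝ) + 2) β x :=
  stmt10_general α β n hn x hx
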